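/- arXiv:2408.04159 — 3 statements merged into one kernel-verified Lean document; each statement's English description precedes it below -/
import Mathlib

section
/- The number field Q(ζ₁₆, √(−1+√2)), obtained by adjoining to Q a primitive 16th root of unity ζ₁₆ and a square root of −1+√2, has degree 16 over Q. -/
/-!
`K = ℚ(ζ₁₆)` has degree 8 and contains `√2 = ±(ζ₁₆² + ζ₁₆⁻²)`, so it suffices that `s ∉ K`,
which makes `[K(s) : K] = 2`.
Since `s² = √2 - 1 > 0`, `s` is real. Galois theory gives `σ ∈ Gal(K/ℚ)` with `σ √2 = -√2`,
and `σ` commutes with complex conjugation because `Gal(K/ℚ)` is abelian. Hence `σ s` would be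
real too, yet `(σ s)² = -1 - √2 < 0`.
-/

open Polynomial IntermediateField ComplexConjugate

theorem Complex.conj_eq_self_iff_of_sq_eq_ofReal {z : ℂ} {r : ℝ} (h : z ^ 2 = r) :
    conj z = z ↔ 0 ≤ r := by
  rw [Complex.conj_eq_iff_im]
  have hre := congrArg Complex.re h
  have him := congrArg Complex.im h
  simp only [sq, Complex.mul_re, Complex.mul_im, Complex.ofReal_re, Complex.ofReal_im] at hre him
  constructor
  · intro him0
    rw [him0] at hre
    nlinarith
  · intro hr
    rcases mul_eq_zero.mp (by linarith : z.re * z.im = 0) with hre0 | him0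
    · rw [hre0] at hre
      nlinarith
    · exact him0

theorem IsPrimitiveRoot.add_inv_sq_eq_two {K : Type*} [Field K] {ξ : K}
    (hξ : IsPrimitiveRoot ξ 8) : (ξ + ξ⁻¹) ^ 2 = 2 := by
  have h4 : ξ ^ 4 = -1 :=
    (hξ.pow (by norm_num) (by norm_num : 8 = 4 * 2)).eq_neg_one_of_two_right
  have h0 : ξ ≠ 0 := hξ.ne_zero (by norm_num)
  field_simp
  linear_combination h4

theorem IsPrimitiveRoot.isCyclotomicExtension_adjoin {n : ℕ} [NeZero n] {ζ : ℂ}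
    (hζ : IsPrimitiveRoot ζ n) : IsCyclotomicExtension {n} ℚ ℚ⟮ζ⟯ := by
  change IsCyclotomicExtension {n} ℚ ℚ⟮ζ⟯.toSubalgebra
  rw [adjoin_simple_toSubalgebra_of_isAlgebraic
    (hζ.isIntegral (NeZero.pos n)).tower_top.isAlgebraic]
  exact hζ.adjoin_isCyclotomicExtension ℚ

theorem IsGalois.exists_apply_eq_neg {F E : Type*} [Field F] [Field E] [Algebra F E]
    [IsGalois F E] [FiniteDimensional F E] {x : E} (hx : x ∉ (⊥ : IntermediateField F E))
    (hsq : x ^ 2 ∈ (⊥ : IntermediateField F E)) : ∃ σ : Gal(E/F), σ x = -x := by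
  obtain ⟨σ, hσ⟩ := not_forall.mp (mt (IsGalois.mem_bot_iff_fixed x).mpr hx)
  obtain ⟨a, ha⟩ := IntermediateField.mem_bot.mp hsq
  have hσsq : σ x ^ 2 = x ^ 2 := by rw [← map_pow, ← ha, AlgEquiv.commutes]
  exact ⟨σ, (sq_eq_sq_iff_eq_or_eq_neg.mp hσsq).resolve_left hσ⟩

namespace IntermediateField

theorem finrank_adjoin_simple_eq_two {F E : Type*} [Field F] [Field E] [Algebra F E] {x : E}
    (hx : x ∉ (⊥ : IntermediateField F E)) (hsq : x ^ 2 ∈ (⊥ : IntermediateField F E)) :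
    Module.finrank F F⟮x⟯ = 2 := by
  obtain ⟨a, ha⟩ := mem_bot.mp hsq
  have hmonic : (X ^ 2 - C a).Monic := monic_X_pow_sub_C a two_ne_zero
  have hroot : aeval x (X ^ 2 - C a) = 0 := by simp [ha]
  have hint : IsIntegral F x := ⟨_, hmonic, hroot⟩
  rw [adjoin.finrank hint]
  refine le_antisymm ?_ ((minpoly.two_le_natDegree_iff hint).mpr (by simpa [mem_bot] using hx))
  have hdeg := minpoly.degree_le_of_ne_zero F x hmonic.ne_zero hroot
  rw [degree_X_pow_sub_C two_pos] at hdeg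
  exact natDegree_le_iff_degree_le.mpr hdeg

theorem finrank_adjoin_pair {F E : Type*} [Field F] [Field E] [Algebra F E] (x y : E) :
    Module.finrank F (adjoin F ({x, y} : Set E)) =
      Module.finrank F F⟮x⟯ * Module.finrank F⟮x⟯ F⟮x⟯⟮y⟯ := by
  rw [Set.insert_eq, ← adjoin_adjoin_left, Module.finrank_mul_finrank]
  rfl

theorem sqrt_two_mem_of_isPrimitiveRoot {K : IntermediateField ℚ ℂ} {ξ : ℂ}
    (hξ : IsPrimitiveRoot ξ 8) (hK : ξ ∈ K) : (√2 : ℂ) ∈ K := by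
  have hw : ξ + ξ⁻¹ ∈ K := add_mem hK (inv_mem hK)
  have hsq : ((√2 : ℝ) : ℂ) ^ 2 = (ξ + ξ⁻¹) ^ 2 := by
    rw [hξ.add_inv_sq_eq_two, ← Complex.ofReal_pow, Real.sq_sqrt zero_le_two]
    norm_num
  rcases sq_eq_sq_iff_eq_or_eq_neg.mp hsq with h | h <;> rw [h]
  · exact hw
  · exact neg_mem hw

theorem conj_algEquiv_apply_of_conj_eq {K : IntermediateField ℚ ℂ} [Normal ℚ K]
    [IsMulCommutative Gal(K/ℚ)] (σ : Gal(K/ℚ)) {x : K} (hx : conj (x : ℂ) = x) :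
    conj (σ x : ℂ) = σ x := by
  set c : Gal(K/ℚ) := (starRingAut : ℂ ≃+* ℂ).toRatAlgEquiv.restrictNormal K
  have hc : ∀ y : K, (c y : ℂ) = conj (y : ℂ) := AlgEquiv.restrictNormal_commutes _ K
  have hcx : c x = x := Subtype.ext ((hc x).trans hx)
  rw [← hc, ← AlgEquiv.mul_apply, mul_comm', AlgEquiv.mul_apply, hcx]

theorem notMem_of_sq_eq_neg_one_add_sqrt_two {K : IntermediateField ℚ ℂ} [IsGalois ℚ K]
    [FiniteDimensional ℚ K] [IsMulCommutative Gal(K/ℚ)] (h2 : (√2 : ℂ) ∈ K) {s : ℂ}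
    (hs : s ^ 2 = -1 + √2) : s ∉ K := by
  intro hsK
  set r : K := ⟨√2, h2⟩
  have hr : r ∉ (⊥ : IntermediateField ℚ K) := by
    rintro ⟨q, hq⟩
    apply irrational_sqrt_two.ne_rat q
    have hq' := congrArg ((↑) : K → ℂ) hq
    simp only [eq_ratCast, r] at hq'
    exact Complex.ofReal_injective (by simpa using hq'.symm)
  have hr2 : algebraMap ℚ K 2 = r ^ 2 := Subtype.ext (by simp [r, ← Complex.ofReal_pow]; rfl)
  obtain ⟨σ, hσ⟩ := IsGalois.exists_apply_eq_neg hr ⟨2, hr2⟩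
  set x : K := ⟨s, hsK⟩
  have hx : x ^ 2 = -1 + r := Subtype.ext (by simpa [x, r] using hs)
  have hσx : (σ x : ℂ) ^ 2 = ((-1 - √2 : ℝ) : ℂ) := by
    rw [← IntermediateField.coe_pow, ← map_pow, hx, map_add, hσ]
    push_cast
    simp [r, sub_eq_add_neg]
  have hs' : s ^ 2 = ((-1 + √2 : ℝ) : ℂ) := by push_cast; exact hs
  have hreal : conj s = s :=
    (Complex.conj_eq_self_iff_of_sq_eq_ofReal hs').mpr (by linarith [Real.one_lt_sqrt_two])
  have hσreal := conj_algEquiv_apply_of_conj_eq σ (x := x) hreal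
  have hnonneg := (Complex.conj_eq_self_iff_of_sq_eq_ofReal hσx).mp hσreal
  linarith [Real.sqrt_nonneg 2]

end IntermediateField

/-- The number field `ℚ(ζ₁₆, √(−1+√2))` has degree 16 over `ℚ`. -/
theorem stmt_0 (ζ s : ℂ) (hζ : IsPrimitiveRoot ζ 16)
    (hs : s ^ 2 = -1 + (Real.sqrt 2 : ℂ)) :
    Module.finrank ℚ ↥(IntermediateField.adjoin ℚ ({ζ, s} : Set ℂ)) = 16 := by
  have := hζ.isCyclotomicExtension_adjoin
  have := IsCyclotomicExtension.isGalois {16} ℚ ℚ⟮ζ⟯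
  have := IsCyclotomicExtension.isMulCommutative {16} ℚ ℚ⟮ζ⟯
  have := IsCyclotomicExtension.finiteDimensional {16} ℚ ℚ⟮ζ⟯
  have hdeg : Module.finrank ℚ ℚ⟮ζ⟯ = 8 := by
    rw [IsCyclotomicExtension.finrank ℚ⟮ζ⟯ (cyclotomic.irreducible_rat (n := 16) (by norm_num))]
    decide
  have hsqrt2 : (√2 : ℂ) ∈ ℚ⟮ζ⟯ :=
    sqrt_two_mem_of_isPrimitiveRoot (hζ.pow (by norm_num) (by norm_num : 16 = 2 * 8))
      (pow_mem (mem_adjoin_simple_self ℚ ζ) 2)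
  have hsK : s ∉ ℚ⟮ζ⟯ := notMem_of_sq_eq_neg_one_add_sqrt_two hsqrt2 hs
  have hbot (x : ℂ) : x ∈ (⊥ : IntermediateField ℚ⟮ζ⟯ ℂ) ↔ x ∈ ℚ⟮ζ⟯ := by
    rw [mem_bot]
    exact ⟨by rintro ⟨y, rfl⟩; exact y.2, fun h => ⟨⟨x, h⟩, rfl⟩⟩
  have hrel : Module.finrank ℚ⟮ζ⟯ ℚ⟮ζ⟯⟮s⟯ = 2 := by
    refine finrank_adjoin_simple_eq_two ((hbot s).not.mpr hsK) ((hbot _).mpr ?_)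
    rw [hs]
    exact add_mem (neg_mem (one_mem _)) hsqrt2
  rw [finrank_adjoin_pair, hdeg, hrel]
end

section
/- The field Q(ζ₁₆, √(−1+√2)) contains a fourth root of 2 and a fourth root of −2. -/
/-!
Let `r = √2`. Since `ζ ^ 8 = -1`, the element `a = ζ² - ζ⁶` satisfies `a² = 2`, so `a = ±r`,
and `(ζ - ζ⁷)² = 2 + a`, `(ζ³ - ζ⁵)² = 2 - a`; hence one of them is a square root `c` of
`2 + r`. Then `(s c)² = (r - 1)(r + 2) = r`, so `x = s c` has `x⁴ = 2`, and `y = ζ² x` has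
`y⁴ = ζ⁸ x⁴ = -2`.
-/

section CommRing

variable {R : Type*} [CommRing R] {ζ : R}

theorem sq_sub_pow_six_eq_two (h8 : ζ ^ 8 = -1) : (ζ ^ 2 - ζ ^ 6) ^ 2 = 2 := by
  linear_combination (ζ ^ 4 - 2) * h8

theorem sq_sub_pow_seven_eq (h8 : ζ ^ 8 = -1) : (ζ - ζ ^ 7) ^ 2 = 2 + (ζ ^ 2 - ζ ^ 6) := by
  linear_combination (ζ ^ 6 - 2) * h8

theorem sq_pow_three_sub_pow_five_eq (h8 : ζ ^ 8 = -1) :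
    (ζ ^ 3 - ζ ^ 5) ^ 2 = 2 - (ζ ^ 2 - ζ ^ 6) := by
  linear_combination (ζ ^ 2 - 2) * h8

theorem exists_sq_eq_two_add_of_pow_eight_eq_neg_one [NoZeroDivisors R] {r : R}
    (h8 : ζ ^ 8 = -1) (hr : r ^ 2 = 2) :
    ∃ c ∈ ({ζ - ζ ^ 7, ζ ^ 3 - ζ ^ 5} : Set R), c ^ 2 = 2 + r := by
  have ha : (ζ ^ 2 - ζ ^ 6) ^ 2 = r ^ 2 := by rw [sq_sub_pow_six_eq_two h8, hr]
  rcases sq_eq_sq_iff_eq_or_eq_neg.mp ha with ha | ha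
  · exact ⟨ζ - ζ ^ 7, by simp, by rw [sq_sub_pow_seven_eq h8, ha]⟩
  · refine ⟨ζ ^ 3 - ζ ^ 5, by simp, ?_⟩
    rw [sq_pow_three_sub_pow_five_eq h8, ha, sub_neg_eq_add]

theorem pow_four_mul_eq_two {r s c : R} (hr : r ^ 2 = 2) (hs : s ^ 2 = -1 + r)
    (hc : c ^ 2 = 2 + r) : (s * c) ^ 4 = 2 := by
  have hsc : (s * c) ^ 2 = r := by
    rw [mul_pow, hs, hc]
    linear_combination hr
  rw [show 4 = 2 * 2 from rfl, pow_mul, hsc, hr]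

theorem pow_four_sq_mul_of_pow_eight_eq_neg_one (h8 : ζ ^ 8 = -1) (x : R) :
    (ζ ^ 2 * x) ^ 4 = -x ^ 4 := by
  rw [mul_pow, ← pow_mul, h8, neg_one_mul]

end CommRing

/-- `ℚ(ζ₁₆, √(−1+√2))` contains a fourth root of `2` and a fourth root of `−2`. -/
theorem stmt_1 (ζ s : ℂ) (hζ : IsPrimitiveRoot ζ 16)
    (hs : s ^ 2 = -1 + (Real.sqrt 2 : ℂ)) :
    (∃ x ∈ IntermediateField.adjoin ℚ ({ζ, s} : Set ℂ), x ^ 4 = (2 : ℂ)) ∧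
    (∃ y ∈ IntermediateField.adjoin ℚ ({ζ, s} : Set ℂ), y ^ 4 = (-2 : ℂ)) := by
  set K := IntermediateField.adjoin ℚ ({ζ, s} : Set ℂ)
  have hζK : ζ ∈ K := IntermediateField.subset_adjoin _ _ (by simp)
  have hsK : s ∈ K := IntermediateField.subset_adjoin _ _ (by simp)
  have h8 : ζ ^ 8 = -1 :=
    (hζ.pow (by norm_num) (by norm_num : 16 = 8 * 2)).eq_neg_one_of_two_right
  have hr : ((Real.sqrt 2 : ℝ) : ℂ) ^ 2 = 2 := by norm_cast; simp
  obtain ⟨c, hc, hc2⟩ := exists_sq_eq_two_add_of_pow_eight_eq_neg_one h8 hr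
  have hcK : c ∈ K := by
    rcases hc with rfl | rfl
    · exact sub_mem hζK (pow_mem hζK 7)
    · exact sub_mem (pow_mem hζK 3) (pow_mem hζK 5)
  have hx : (s * c) ^ 4 = 2 := pow_four_mul_eq_two hr hs hc2
  have hxK : s * c ∈ K := mul_mem hsK hcK
  refine ⟨⟨s * c, hxK, hx⟩, ⟨ζ ^ 2 * (s * c), mul_mem (pow_mem hζK 2) hxK, ?_⟩⟩
  rw [pow_four_sq_mul_of_pow_eight_eq_neg_one h8, hx]
end

section
/- Let d be a rational number with 16d sixth-power-free and let F = Q(√d, √−3, ∛d). Then [F : Q] = 2 if d ∈ {1, −27}; [F : Q] = 4 if d = t³ for some rational t with t ∉ {1, −3} (and d not in the previous case); [F : Q] = 6 if d = t² or d = −3t² for some rational t and d is not a cube times a unit case as above; and [F : Q] = 12 otherwise. -/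
/-!
Put `K = ℚ(√−3)`, so that `F = K(∛d)(√d)` and `[F : ℚ] = 2 · [K(∛d) : K] · [F : K(∛d)]`.
Writing elements of `K` as `a + b√−3` shows that `d` is a cube in `K` only if it is a cube
in `ℚ`, and a square in `K` only if `d = t²` or `d = −3t²`. As `K` contains the cube roots
of unity, the middle factor is `1` if `d` is a cube and `3` otherwise. The last factor is `1`
if `d` is a square in `K` and `2` otherwise: a square root of `d` in `K(∛d)` would generate
a quadratic subextension of an extension of degree `1` or `3`. Finally, if `d` is both a cube
and of the form `t²` or `−3t²`, then `d = w⁶` or `d = −27w⁶`, and since `16d` is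
sixth-power-free, `w = ±1`.
-/

open Polynomial IntermediateField Module SubfieldClass

section RadicalAdjunction

variable {F L : Type*} [Field F] [Field L] [Algebra F L]

theorem finrank_adjoin_simple_of_pow_eq {p : ℕ} (hp : p.Prime) {x : L} {a : F}
    (hx : x ^ p = algebraMap F L a) (h : ∀ b : F, b ^ p ≠ a) : finrank F F⟮x⟯ = p := by
  have hirr : Irreducible (X ^ p - C a) := X_pow_sub_C_irreducible_of_prime hp h
  have hmonic : (X ^ p - C a).Monic := monic_X_pow_sub_C a hp.ne_zero
  have hroot : aeval x (X ^ p - C a) = 0 := by simp [hx]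
  have hint : IsIntegral F x := IsAlgebraic.isIntegral ⟨_, hmonic.ne_zero, hroot⟩
  rw [adjoin.finrank hint, ← minpoly.eq_of_irreducible_of_monic hirr hroot hmonic,
    natDegree_X_pow_sub_C]

theorem IntermediateField.finrank_adjoin_simple_of_pow_eq_of_mem (E : IntermediateField F L)
    {p : ℕ} (hp : p.Prime) {x a : L} (ha : a ∈ E) (hx : x ^ p = a) (h : ∀ z ∈ E, z ^ p ≠ a) :
    finrank E E⟮x⟯ = p :=
  finrank_adjoin_simple_of_pow_eq (a := ⟨a, ha⟩) hp hx
    fun b hb => h b b.2 (congrArg Subtype.val hb)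

theorem IntermediateField.finrank_adjoin_simple_of_mem (E : IntermediateField F L) {x : L}
    (hx : x ∈ E) : finrank E E⟮x⟯ = 1 :=
  finrank_adjoin_simple_eq_one_iff.mpr (mem_bot.mpr ⟨⟨x, hx⟩, rfl⟩)

theorem IntermediateField.finrank_adjoin_insert (x : L) (S : Set L) :
    finrank F (adjoin F (insert x S)) = finrank F F⟮x⟯ * finrank F⟮x⟯ (adjoin F⟮x⟯ S) := by
  rw [← Set.singleton_union, ← adjoin_adjoin_left]
  exact (finrank_mul_finrank F F⟮x⟯ (adjoin F⟮x⟯ S)).symm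

theorem IntermediateField.mem_of_sq_eq_sq {E : IntermediateField F L} {z w : L} (hw : w ∈ E)
    (h : z ^ 2 = w ^ 2) : z ∈ E := by
  rcases sq_eq_sq_iff_eq_or_eq_neg.mp h with rfl | rfl
  exacts [hw, E.neg_mem hw]

-- `z ^ 3 - w ^ 3 = (z - w) (z - ω w) (z - ω² w)` with `ω = (-1 + r) / 2`.
theorem IntermediateField.mem_of_cube_eq_cube [CharZero L] {E : IntermediateField F L} {r : L}
    (hr : r ^ 2 = -3) (hrE : r ∈ E) {z w : L} (hw : w ∈ E) (h : z ^ 3 = w ^ 3) : z ∈ E := by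
  have hroots : (z - w) * ((2 * z + w - r * w) * (2 * z + w + r * w)) = 0 := by
    linear_combination 4 * h - (z - w) * w ^ 2 * hr
  have h2 : (2 : L) ∈ E := ofNat_mem E 2
  rcases mul_eq_zero.mp hroots with h0 | h0
  · rwa [sub_eq_zero.mp h0]
  rcases mul_eq_zero.mp h0 with h1 | h1
  · rw [show z = (r * w - w) / 2 by linear_combination h1 / 2]
    exact E.div_mem (E.sub_mem (E.mul_mem hrE hw) hw) h2
  · rw [show z = (-(r * w) - w) / 2 by linear_combination h1 / 2]
    exact E.div_mem (E.sub_mem (E.neg_mem (E.mul_mem hrE hw)) hw) h2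

theorem exists_eq_add_mul_of_mem_adjoin {r : L} {q : F} (hr : r ^ 2 = algebraMap F L q) {z : L}
    (hz : z ∈ F⟮r⟯) : ∃ a b : F, z = algebraMap F L a + algebraMap F L b * r := by
  have hq : aeval r (X ^ 2 - C q) = 0 := by simp [hr]
  have hq0 : X ^ 2 - C q ≠ 0 := X_pow_sub_C_ne_zero two_pos q
  let pb := adjoin.powerBasis (IsAlgebraic.isIntegral ⟨_, hq0, hq⟩)
  have hdim : pb.dim ≤ 2 := natDegree_le_of_degree_le <|
    (minpoly.degree_le_of_ne_zero F r hq0 hq).trans (degree_X_pow_sub_C two_pos q).le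
  obtain ⟨f, hf, hzf⟩ := pb.exists_eq_aeval ⟨z, hz⟩
  obtain ⟨b, a, rfl⟩ := exists_eq_X_add_C_of_natDegree_le_one (show f.natDegree ≤ 1 by omega)
  refine ⟨a, b, ?_⟩
  simpa [add_comm, pb] using congrArg Subtype.val hzf

end RadicalAdjunction

section SqrtNegThree

variable {L : Type*} [Field L] [CharZero L] {r : L}

theorem eq_zero_of_ratCast_add_mul_eq_zero (hr : r ^ 2 = -3) {a b : ℚ}
    (h : (a : L) + b * r = 0) : a = 0 ∧ b = 0 := by
  have hnorm : ((a ^ 2 + 3 * b ^ 2 : ℚ) : L) = 0 := by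
    push_cast
    linear_combination (a - b * r) * h + b ^ 2 * hr
  obtain ⟨ha, hb⟩ := (add_eq_zero_iff_of_nonneg (by positivity) (by positivity)).mp
    (Rat.cast_eq_zero.mp hnorm)
  exact ⟨pow_eq_zero_iff two_ne_zero |>.mp ha, by simpa using hb⟩

theorem exists_ratCast_add_mul_of_mem_adjoin (hr : r ^ 2 = -3) {z : L} (hz : z ∈ ℚ⟮r⟯) :
    ∃ a b : ℚ, z = a + b * r := by
  simpa using exists_eq_add_mul_of_mem_adjoin (q := -3) (by simpa using hr) hz

theorem exists_eq_sq_or_eq_neg_three_mul_sq_of_mem_adjoin (hr : r ^ 2 = -3) {z : L}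
    (hz : z ∈ ℚ⟮r⟯) {d : ℚ} (h : z ^ 2 = d) : ∃ t : ℚ, d = t ^ 2 ∨ d = -3 * t ^ 2 := by
  obtain ⟨a, b, rfl⟩ := exists_ratCast_add_mul_of_mem_adjoin hr hz
  obtain ⟨hreal, himag⟩ := eq_zero_of_ratCast_add_mul_eq_zero hr (a := a ^ 2 - 3 * b ^ 2 - d)
    (b := 2 * a * b) (by push_cast; linear_combination h - (b : L) ^ 2 * hr)
  rcases mul_eq_zero.mp (show a * b = 0 by linarith) with rfl | rfl
  · exact ⟨b, Or.inr (by linarith)⟩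
  · exact ⟨a, Or.inl (by linarith)⟩

theorem exists_eq_cube_of_mem_adjoin (hr : r ^ 2 = -3) {z : L} (hz : z ∈ ℚ⟮r⟯) {d : ℚ}
    (h : z ^ 3 = d) :
    ∃ t : ℚ, d = t ^ 3 := by
  obtain ⟨a, b, rfl⟩ := exists_ratCast_add_mul_of_mem_adjoin hr hz
  obtain ⟨hreal, himag⟩ := eq_zero_of_ratCast_add_mul_eq_zero hr
    (a := a ^ 3 - 9 * a * b ^ 2 - d) (b := 3 * a ^ 2 * b - 3 * b ^ 3)
    (by push_cast; linear_combination h - (3 * a * b ^ 2 + (b : L) ^ 3 * r) * hr)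
  rcases mul_eq_zero.mp (show b * (a ^ 2 - b ^ 2) = 0 by linarith) with rfl | hab
  · exact ⟨a, by linarith⟩
  · exact ⟨-2 * a, by linear_combination -hreal + 9 * a * hab⟩

theorem finrank_adjoin_sqrt_neg_three (hr : r ^ 2 = -3) : finrank ℚ ℚ⟮r⟯ = 2 :=
  finrank_adjoin_simple_of_pow_eq Nat.prime_two (a := -3) (by simpa using hr)
    fun b hb => by nlinarith [sq_nonneg b]

variable {s c : L} {d : ℚ}

open scoped Classical in
theorem finrank_adjoin_cbrt (hr : r ^ 2 = -3) (hc : c ^ 3 = d) :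
    finrank ℚ⟮r⟯ ℚ⟮r⟯⟮c⟯ = if ∃ t : ℚ, d = t ^ 3 then 1 else 3 := by
  split_ifs with hcube
  · obtain ⟨t, rfl⟩ := hcube
    exact finrank_adjoin_simple_of_mem _ <| mem_of_cube_eq_cube hr (mem_adjoin_simple_self ℚ r)
      (ratCast_mem _ t) (by rw [hc]; push_cast; rfl)
  · exact finrank_adjoin_simple_of_pow_eq_of_mem _ Nat.prime_three (ratCast_mem _ d) hc
      fun z hz h => hcube (exists_eq_cube_of_mem_adjoin hr hz h)

open scoped Classical in
theorem finrank_adjoin_sqrt (hr : r ^ 2 = -3) (hs : s ^ 2 = d) (hc : c ^ 3 = d) :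
    finrank ℚ⟮r⟯⟮c⟯ ℚ⟮r⟯⟮c⟯⟮s⟯ =
      if ∃ t : ℚ, d = t ^ 2 ∨ d = -3 * t ^ 2 then 1 else 2 := by
  split_ifs with hsq
  · have hrE : r ∈ ℚ⟮r⟯⟮c⟯ := (ℚ⟮r⟯⟮c⟯).algebraMap_mem ⟨r, mem_adjoin_simple_self ℚ r⟩
    refine finrank_adjoin_simple_of_mem _ ?_
    obtain ⟨t, rfl | rfl⟩ := hsq
    · exact mem_of_sq_eq_sq (ratCast_mem _ t) (by rw [hs]; push_cast; rfl)
    · exact mem_of_sq_eq_sq (mul_mem (ratCast_mem _ t) hrE)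
        (by rw [hs]; push_cast; linear_combination -(t : L) ^ 2 * hr)
  · refine finrank_adjoin_simple_of_pow_eq_of_mem _ Nat.prime_two (ratCast_mem _ d) hs
      fun z hz hz2 => ?_
    have hdeg : finrank ℚ⟮r⟯ ℚ⟮r⟯⟮z⟯ = 2 :=
      finrank_adjoin_simple_of_pow_eq_of_mem _ Nat.prime_two (ratCast_mem _ d) hz2
        fun w hw h => hsq (exists_eq_sq_or_eq_neg_three_mul_sq_of_mem_adjoin hr hw h)
    have hdvd := finrank_dvd_of_le_right (adjoin_simple_le_iff.mpr hz)
    rw [hdeg, finrank_adjoin_cbrt hr hc] at hdvd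
    split_ifs at hdvd <;> norm_num at hdvd

end SqrtNegThree

section SixthPowerFree

theorem Int.natAbs_eq_one_of_pow_dvd {n : ℕ} {m a : ℤ} (hm : ∀ p : ℤ, Prime p → ¬ p ^ n ∣ m)
    (h : a ^ n ∣ m) : a.natAbs = 1 := by
  by_contra ha
  obtain ⟨p, hp, hpa⟩ := Int.exists_prime_and_dvd ha
  exact hm p hp ((pow_dvd_pow_of_dvd hpa n).trans h)

theorem Rat.abs_eq_one_of_intCast_eq_mul_pow {n : ℕ} {m C : ℤ} {w : ℚ}
    (hm : ∀ p : ℤ, Prime p → ¬ p ^ n ∣ m) (hC : ∀ k : ℕ, (k : ℤ) ^ n ∣ C → k = 1)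
    (h : (m : ℚ) = C * w ^ n) : |w| = 1 := by
  have hcleared : m * (w.den : ℤ) ^ n = C * w.num ^ n := by
    have : (m : ℚ) * w.den ^ n = C * w.num ^ n := by
      rw [h, ← Rat.mul_den_eq_num, mul_pow, mul_assoc]
    exact_mod_cast this
  have hcop : IsCoprime (w.num ^ n) ((w.den : ℤ) ^ n) := w.isCoprime_num_den.pow
  have hden : w.den = 1 :=
    hC _ (hcop.symm.dvd_of_dvd_mul_right ⟨m, by linear_combination -hcleared⟩)
  have hnum : w.num.natAbs = 1 :=
    Int.natAbs_eq_one_of_pow_dvd hm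
      (hcop.dvd_of_dvd_mul_right ⟨C, by linear_combination hcleared⟩)
  rw [← (Rat.den_eq_one_iff w).mp hden, ← Int.cast_abs, Int.abs_eq_natAbs, hnum]
  rfl

theorem eq_one_or_eq_neg_27_of_eq_cube_of_eq_sq {d : ℚ} {m : ℤ} (hm : (m : ℚ) = 16 * d)
    (hsf : ∀ p : ℤ, Prime p → ¬ p ^ 6 ∣ m) {t u : ℚ} (ht : d = t ^ 3)
    (hu : d = u ^ 2 ∨ d = -3 * u ^ 2) : d = 1 ∨ d = -27 := by
  have h432 : ∀ k : ℕ, (k : ℤ) ^ 6 ∣ -432 → k = 1 := by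
    intro k hk
    have hk3 : k < 3 := by
      by_contra! hk3
      have := Int.le_of_dvd (by norm_num) (dvd_neg.mpr hk)
      have := pow_le_pow_left₀ (by norm_num) (show (3 : ℤ) ≤ k by exact_mod_cast hk3) 6
      linarith
    interval_cases k
    all_goals first | rfl | norm_num at hk
  have hd : d = d ^ 3 / d ^ 2 := by
    rcases eq_or_ne d 0 with rfl | hd0
    · simp
    · field_simp
  have ht2 : d ^ 2 = t ^ 6 := by rw [ht]; ring
  rcases hu with hu | hu
  · have hw : d = (u / t) ^ 6 := by rw [hd, div_pow, ← ht2, hu]; ring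
    have habs := Rat.abs_eq_one_of_intCast_eq_mul_pow hsf (C := 16) (w := u / t)
      (fun k hk => h432 k (hk.trans (by norm_num))) (by rw [hm, hw]; push_cast; ring)
    left
    rw [hw, ← (show Even 6 by decide).pow_abs, habs, one_pow]
  · have hw : d = -27 * (u / t) ^ 6 := by rw [hd, div_pow, ← ht2, hu]; ring
    have habs := Rat.abs_eq_one_of_intCast_eq_mul_pow hsf (w := u / t) h432
      (by rw [hm, hw]; push_cast; ring)
    right
    rw [hw, ← (show Even 6 by decide).pow_abs, habs, one_pow, mul_one]

end SixthPowerFree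

theorem stmt_17_general (d : ℚ) (m : ℤ) (hm : (m : ℚ) = 16 * d)
    (hsf : ∀ p : ℤ, Prime p → ¬ p ^ 6 ∣ m)
    (s r c : ℂ) (hs : s ^ 2 = (d : ℂ)) (hr : r ^ 2 = -3) (hc : c ^ 3 = (d : ℂ)) :
    ((d = 1 ∨ d = -27) →
      Module.finrank ℚ ↥(IntermediateField.adjoin ℚ ({s, r, c} : Set ℂ)) = 2) ∧
    ((∃ t : ℚ, d = t ^ 3) ∧ ¬(d = 1 ∨ d = -27) →
      Module.finrank ℚ ↥(IntermediateField.adjoin ℚ ({s, r, c} : Set ℂ)) = 4) ∧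
    ((∃ t : ℚ, d = t ^ 2 ∨ d = -3 * t ^ 2) ∧ ¬(∃ t : ℚ, d = t ^ 3) ∧
        ¬(d = 1 ∨ d = -27) →
      Module.finrank ℚ ↥(IntermediateField.adjoin ℚ ({s, r, c} : Set ℂ)) = 6) ∧
    (¬(d = 1 ∨ d = -27) ∧ ¬(∃ t : ℚ, d = t ^ 3) ∧
        ¬(∃ t : ℚ, d = t ^ 2 ∨ d = -3 * t ^ 2) →
      Module.finrank ℚ ↥(IntermediateField.adjoin ℚ ({s, r, c} : Set ℂ)) = 12) := by
  classical
  have hdeg : finrank ℚ (adjoin ℚ ({s, r, c} : Set ℂ)) =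
      2 * (if ∃ t : ℚ, d = t ^ 3 then 1 else 3) *
        (if ∃ t : ℚ, d = t ^ 2 ∨ d = -3 * t ^ 2 then 1 else 2) := by
    rw [Set.insert_comm, Set.pair_comm s c, finrank_adjoin_insert, finrank_adjoin_insert,
      finrank_adjoin_sqrt_neg_three hr, finrank_adjoin_cbrt hr hc, finrank_adjoin_sqrt hr hs hc,
      mul_assoc]
  rw [hdeg]
  refine ⟨?_, ?_, ?_, ?_⟩
  · rintro (rfl | rfl)
    · rw [if_pos ⟨1, by norm_num⟩, if_pos ⟨1, by norm_num⟩]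
    · rw [if_pos ⟨-3, by norm_num⟩, if_pos ⟨3, by norm_num⟩]
  · rintro ⟨⟨t, ht⟩, hd⟩
    rw [if_pos ⟨t, ht⟩,
      if_neg fun ⟨u, hu⟩ => hd (eq_one_or_eq_neg_27_of_eq_cube_of_eq_sq hm hsf ht hu)]
  · rintro ⟨hsq, hcube, -⟩
    rw [if_neg hcube, if_pos hsq]
  · rintro ⟨-, hcube, hsq⟩
    rw [if_neg hcube, if_neg hsq]

/-- Degree of `F = ℚ(√d, √−3, ∛d)` over `ℚ`, for `d ∈ ℚ^×` with `16d` a sixth-power-free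
integer: it is `2` if `d ∈ {1, −27}`; `4` if `d` is a cube (and not in the previous case);
`6` if `d = t²` or `d = −3t²` (and `d` is not a cube nor in the first case); and `12`
otherwise. -/
theorem stmt_17 (d : ℚ) (hd0 : d ≠ 0) (m : ℤ) (hm : (m : ℚ) = 16 * d)
    (hsf : ∀ p : ℤ, Prime p → ¬ p ^ 6 ∣ m)
    (s r c : ℂ) (hs : s ^ 2 = (d : ℂ)) (hr : r ^ 2 = -3) (hc : c ^ 3 = (d : ℂ)) :
    ((d = 1 ∨ d = -27) →
      Module.finrank ℚ ↥(IntermediateField.adjoin ℚ ({s, r, c} : Set ℂ)) = 2) ∧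
    ((∃ t : ℚ, d = t ^ 3) ∧ ¬(d = 1 ∨ d = -27) →
      Module.finrank ℚ ↥(IntermediateField.adjoin ℚ ({s, r, c} : Set ℂ)) = 4) ∧
    ((∃ t : ℚ, d = t ^ 2 ∨ d = -3 * t ^ 2) ∧ ¬(∃ t : ℚ, d = t ^ 3) ∧
        ¬(d = 1 ∨ d = -27) →
      Module.finrank ℚ ↥(IntermediateField.adjoin ℚ ({s, r, c} : Set ℂ)) = 6) ∧
    (¬(d = 1 ∨ d = -27) ∧ ¬(∃ t : ℚ, d = t ^ 3) ∧
        ¬(∃ t : ℚ, d = t ^ 2 ∨ d = -3 * t ^ 2) →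
      Module.finrank ℚ ↥(IntermediateField.adjoin ℚ ({s, r, c} : Set ℂ)) = 12) :=
  stmt_17_general d m hm hsf s r c hs hr hc
end
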